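/- Let L be a finite co-Heyting algebra and let x₁, …, x_r be the join-irreducible components of ⊤ (i.e., the maximal join-irreducible elements of L). Then the following are equivalent: (1) L satisfies the identity (⊤ \ x) ⊓ (⊤ \ (⊤ \ x)) = ⊥ for all x; (2) xᵢ ⊓ xⱼ = ⊥ whenever i ≠ j; (3) L is isomorphic to a finite product of co-Heyting algebras each of whose top element is join irreducible. -/

import Mathlib

/-!
If `⊤` is join irreducible, then `(⊤ \ x) ⊔ (⊤ \ (⊤ \ x)) = ⊤` forces one of the two terms to be
`⊤`, and the other is then `⊥`; the law passes to products and to subalgebras. Conversely, let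
`p ≠ q` be maximal join-irreducibles. Join-irreducibles are join prime, so `q ≤ p ⊔ (⊤ \ p)` gives
`q ≤ ⊤ \ p`. Since `⊤ \ p` lies below the join of the other components, `p ≰ ⊤ \ p`, and the
same argument gives `p ≤ ⊤ \ (⊤ \ p)`; the law then yields `p ⊓ q = ⊥`. Finally, pairwise disjoint
components `xᵢ` with join `⊤` split `L` as `∏ᵢ [⊥, xᵢ]` via `a ↦ (a ⊓ xᵢ)ᵢ`; this is an order
isomorphism, hence one of co-Heyting algebras, and each factor has the join-irreducible top `xᵢ`.
-/

/-- `Ll b a` means `b ≪ a`: `a \ b = a` and `b ≤ a`. -/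
def Ll {L : Type*} [CoheytingAlgebra L] (b a : L) : Prop := a \ b = a ∧ b ≤ a

/-- An embedding of co-Heyting algebras: injective and preserving `⊥`, `⊤`, `⊔`, `⊓`, `\`. -/
def IsCoheytingEmb {K L : Type*} [CoheytingAlgebra K] [CoheytingAlgebra L] (f : K → L) : Prop :=
  Function.Injective f ∧ f ⊥ = ⊥ ∧ f ⊤ = ⊤ ∧
    (∀ a b, f (a ⊔ b) = f a ⊔ f b) ∧ (∀ a b, f (a ⊓ b) = f a ⊓ f b) ∧
    (∀ a b, f (a \ b) = f a \ f b)

/-- The top element is join irreducible. -/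
def TopIrred (α : Type*) [CoheytingAlgebra α] : Prop := SupIrred (⊤ : α)

open Finset Function

/-- The co-Heyting dual of the weak excluded middle law `¬x ∨ ¬¬x = ⊤`. -/
def WeakExcludedMiddle (L : Type*) [CoheytingAlgebra L] : Prop :=
  ∀ x : L, (⊤ \ x) ⊓ (⊤ \ (⊤ \ x)) = ⊥

def HasTopIrredDecomposition (L : Type*) [CoheytingAlgebra L] : Prop :=
  ∃ (n : ℕ) (F : Fin n → Type) (inst : ∀ i, CoheytingAlgebra (F i)) (e : L ≃ ∀ i, F i),
    (∀ i, @TopIrred (F i) (inst i)) ∧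
      @IsCoheytingEmb L (∀ i, F i) _ (@Pi.instCoheytingAlgebra (Fin n) F inst) e

namespace Set.Iic

variable {L : Type*} [CoheytingAlgebra L] {a : L}

instance instCoheytingAlgebra : CoheytingAlgebra (Iic a) where
  sdiff b c := ⟨(b : L) \ c, sdiff_le.trans b.2⟩
  hnot b := ⟨a \ b, sdiff_le⟩
  sdiff_le_iff _ _ _ := sdiff_le_iff
  top_sdiff _ := rfl

lemma supIrred_top (ha : SupIrred a) : SupIrred (⊤ : Iic a) := by
  refine ⟨fun hmin => ha.not_isMin fun c _ => ?_, fun b c hbc => ?_⟩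
  · have ha_bot : a ≤ ⊥ := hmin (bot_le : (⊥ : Iic a) ≤ ⊤)
    exact ha_bot.trans bot_le
  · rcases ha.2 (congrArg Subtype.val hbc) with h | h
    · exact Or.inl (Subtype.ext h)
    · exact Or.inr (Subtype.ext h)

end Set.Iic

lemma SupIrred.orderIso_apply {α β : Type*} [SemilatticeSup α] [SemilatticeSup β] {a : α}
    (ha : SupIrred a) (e : α ≃o β) : SupIrred (e a) := by
  refine ⟨fun hmin => ha.not_isMin (e.isMin_apply.mp hmin), fun b c hbc => ?_⟩
  obtain ⟨b, rfl⟩ := e.surjective b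
  obtain ⟨c, rfl⟩ := e.surjective c
  rw [← map_sup, e.apply_eq_iff_eq] at hbc
  simpa only [e.apply_eq_iff_eq] using ha.2 hbc

lemma OrderIso.isCoheytingEmb {α β : Type*} [CoheytingAlgebra α] [CoheytingAlgebra β]
    (e : α ≃o β) : IsCoheytingEmb e :=
  ⟨e.injective, map_bot e, map_top e, map_sup e, map_inf e, map_sdiff e⟩

def OrderIso.piCongrRight {ι : Type*} {α β : ι → Type*} [∀ i, LE (α i)] [∀ i, LE (β i)]
    (e : ∀ i, α i ≃o β i) : (∀ i, α i) ≃o ∀ i, β i where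
  toEquiv := Equiv.piCongrRight fun i => (e i).toEquiv
  map_rel_iff' := by simp [Pi.le_def]

lemma exists_orderIso_coheytingAlgebra_of_small (A : Type*) [CoheytingAlgebra A] [Small.{0} A] :
    ∃ (B : Type) (_ : CoheytingAlgebra B), Nonempty (A ≃o B) :=
  ⟨Shrink A, (equivShrink A).symm.coheytingAlgebra, ⟨orderIsoShrink A⟩⟩

section Decomposition

variable {α ι : Type*} [DistribLattice α] [BoundedOrder α] [Fintype ι] {x : ι → α}

lemma inf_sup_eq_self_of_sup_eq_top (hsup : univ.sup x = ⊤) (a : α) :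
    univ.sup (fun i => a ⊓ x i) = a := by
  rw [← sup_inf_distrib_left, hsup, inf_top_eq]

lemma sup_inf_eq_of_pairwise_disjoint [DecidableEq ι] (hdisj : Pairwise (Disjoint on x))
    {b : ι → α} (hb : ∀ i, b i ≤ x i) (i : ι) : univ.sup b ⊓ x i = b i := by
  rw [sup_inf_distrib_right, ← insert_erase (mem_univ i), sup_insert, inf_eq_left.mpr (hb i),
    sup_eq_left]
  refine Finset.sup_le fun j hj => ?_
  exact ((hdisj (ne_of_mem_erase hj)).mono_left (hb j)).eq_bot ▸ bot_le

def orderIsoPiIic (hdisj : Pairwise (Disjoint on x)) (hsup : univ.sup x = ⊤) :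
    α ≃o ∀ i, Set.Iic (x i) where
  toFun a i := ⟨a ⊓ x i, inf_le_right⟩
  invFun b := univ.sup fun i => (b i : α)
  left_inv := inf_sup_eq_self_of_sup_eq_top hsup
  right_inv b := by
    classical
    funext i
    exact Subtype.ext (sup_inf_eq_of_pairwise_disjoint hdisj (fun j => (b j).2) i)
  map_rel_iff' {a b} := by
    refine ⟨fun h => ?_, fun h i => inf_le_inf_right (x i) h⟩
    rw [← inf_sup_eq_self_of_sup_eq_top hsup a, ← inf_sup_eq_self_of_sup_eq_top hsup b]
    exact Finset.sup_mono_fun fun i _ => h i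

end Decomposition

section Components

variable (L : Type*) [SemilatticeSup L] [Finite L]

noncomputable def topComponents : Finset L :=
  (Set.toFinite {x : L | Maximal SupIrred x}).toFinset

variable {L}

lemma mem_topComponents {x : L} : x ∈ topComponents L ↔ Maximal SupIrred x :=
  Set.Finite.mem_toFinset _

lemma sup_topComponents [BoundedOrder L] : (topComponents L).sup id = ⊤ := by
  obtain ⟨s, hs, hirr⟩ := exists_supIrred_decomposition (⊤ : L)
  refine top_le_iff.mp (hs ▸ Finset.sup_le fun b hb => ?_)
  obtain ⟨m, hbm, hm⟩ := Finite.exists_le_maximal (hirr hb)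
  exact hbm.trans (Finset.le_sup (f := id) (mem_topComponents.mpr hm))

end Components

section CoheytingAlgebra

variable {L : Type*} [CoheytingAlgebra L]

lemma SupIrred.le_or_le_top_sdiff {q : L} (hq : SupIrred q) (p : L) : q ≤ p ∨ q ≤ ⊤ \ p :=
  (supPrime_iff_supIrred.mpr hq).le_sup.mp (le_top.trans le_sup_sdiff)

lemma top_sdiff_le_sup_erase [DecidableEq L] {T : Finset L} (hT : T.sup id = ⊤) {p : L}
    (hp : p ∈ T) : ⊤ \ p ≤ (T.erase p).sup id := by
  have hsplit := sup_insert (f := id) (b := p) (s := T.erase p)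
  rw [insert_erase hp, hT] at hsplit
  exact sdiff_le_iff.mpr hsplit.le

lemma Maximal.not_le_top_sdiff_self [Finite L] {p : L} (hp : Maximal SupIrred p) :
    ¬ p ≤ ⊤ \ p := by
  classical
  intro hle
  obtain ⟨b, hb, hpb⟩ := (supPrime_iff_supIrred.mpr hp.prop).le_finset_sup.mp
    (hle.trans (top_sdiff_le_sup_erase sup_topComponents (mem_topComponents.mpr hp)))
  have hb' : Maximal SupIrred b := mem_topComponents.mp (mem_of_mem_erase hb)
  exact ne_of_mem_erase hb (le_antisymm (hp.2 hb'.prop hpb) hpb)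

lemma Maximal.le_top_sdiff_top_sdiff_self [Finite L] {p : L} (hp : Maximal SupIrred p) :
    p ≤ ⊤ \ (⊤ \ p) :=
  (hp.prop.le_or_le_top_sdiff _).resolve_left hp.not_le_top_sdiff_self

lemma WeakExcludedMiddle.pairwise_disjoint [Finite L] (h : WeakExcludedMiddle L) :
    {p : L | Maximal SupIrred p}.Pairwise Disjoint := by
  intro p hp q hq hpq
  have hqp : ¬ q ≤ p := fun hle => hpq (hq.eq_of_le hp.prop hle).symm
  have hq' : q ≤ ⊤ \ p := (hq.prop.le_or_le_top_sdiff p).resolve_left hqp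
  refine disjoint_iff_inf_le.mpr ?_
  calc p ⊓ q ≤ ⊤ \ (⊤ \ p) ⊓ (⊤ \ p) := inf_le_inf hp.le_top_sdiff_top_sdiff_self hq'
    _ = ⊥ := by rw [inf_comm, h p]

end CoheytingAlgebra

namespace WeakExcludedMiddle

lemma of_topIrred {L : Type*} [CoheytingAlgebra L] (h : TopIrred L) : WeakExcludedMiddle L := by
  intro y
  have hcover : (⊤ \ y) ⊔ (⊤ \ (⊤ \ y)) = ⊤ := by rw [top_sdiff', top_sdiff', sup_hnot_self]
  rcases h.2 hcover with hy | hy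
  · rw [hy, sdiff_self, inf_bot_eq]
  · rw [top_sdiff' y, top_sdiff'] at hy
    rw [top_le_iff.mp (hy ▸ hnot_hnot_le : ⊤ ≤ y), sdiff_self, bot_inf_eq]

lemma pi {ι : Type*} {F : ι → Type*} [∀ i, CoheytingAlgebra (F i)]
    (h : ∀ i, WeakExcludedMiddle (F i)) : WeakExcludedMiddle (∀ i, F i) :=
  fun a => funext fun i => h i (a i)

lemma of_isCoheytingEmb {K M : Type*} [CoheytingAlgebra K] [CoheytingAlgebra M] {f : K → M}
    (hf : IsCoheytingEmb f) (h : WeakExcludedMiddle M) : WeakExcludedMiddle K := by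
  obtain ⟨hinj, hbot, htop, -, hinf, hsdiff⟩ := hf
  intro a
  apply hinj
  rw [hinf, hsdiff, hsdiff, hsdiff, htop, hbot, h]

end WeakExcludedMiddle

lemma HasTopIrredDecomposition.weakExcludedMiddle {L : Type*} [CoheytingAlgebra L]
    (h : HasTopIrredDecomposition L) : WeakExcludedMiddle L :=
  let ⟨_, _, _, _, hirr, he⟩ := h
  .of_isCoheytingEmb he (.pi fun i => .of_topIrred (hirr i))

section Splitting

variable {L : Type*} [CoheytingAlgebra L] [Finite L]

lemma exists_orderIso_pi_Iic_supIrred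
    (h : {p : L | Maximal SupIrred p}.Pairwise Disjoint) :
    ∃ (n : ℕ) (x : Fin n → L), (∀ i, SupIrred (x i)) ∧ Nonempty (L ≃o ∀ i, Set.Iic (x i)) := by
  let T := topComponents L
  let x : Fin T.card → L := fun i => T.equivFin.symm i
  have hx : ∀ i, Maximal SupIrred (x i) := fun i => mem_topComponents.mp (T.equivFin.symm i).2
  have hdisj : Pairwise (Disjoint on x) := fun i j hij =>
    h (hx i) (hx j) fun hxij => hij (T.equivFin.symm.injective (Subtype.ext hxij))
  have hsup : univ.sup x = ⊤ := top_le_iff.mp <| sup_topComponents (L := L) ▸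
    Finset.sup_le fun b hb => le_sup_of_le (mem_univ (T.equivFin ⟨b, hb⟩)) (by simp [x])
  exact ⟨T.card, x, fun i => (hx i).prop, ⟨orderIsoPiIic hdisj hsup⟩⟩

lemma hasTopIrredDecomposition_of_pairwise_disjoint
    (h : {p : L | Maximal SupIrred p}.Pairwise Disjoint) :
    HasTopIrredDecomposition L := by
  obtain ⟨n, x, hx, ⟨φ⟩⟩ := exists_orderIso_pi_Iic_supIrred h
  choose F inst ψ using fun i => exists_orderIso_coheytingAlgebra_of_small (Set.Iic (x i))
  let e : L ≃o ∀ i, F i := φ.trans (OrderIso.piCongrRight fun i => (ψ i).some)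
  refine ⟨n, F, inst, e.toEquiv, fun i => ?_, e.isCoheytingEmb⟩
  unfold TopIrred
  rw [← map_top (ψ i).some]
  exact (Set.Iic.supIrred_top (hx i)).orderIso_apply _

end Splitting

theorem weak_excluded_middle_characterizations (L : Type*) [CoheytingAlgebra L] [Finite L] :
    ((∀ x : L, (⊤ \ x) ⊓ (⊤ \ (⊤ \ x)) = ⊥) ↔
      (∀ x : L, (SupIrred x ∧ ∀ y : L, SupIrred y → x ≤ y → x = y) →
        ∀ y : L, (SupIrred y ∧ ∀ z : L, SupIrred z → y ≤ z → y = z) →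
          x ≠ y → x ⊓ y = ⊥)) ∧
    ((∀ x : L, (⊤ \ x) ⊓ (⊤ \ (⊤ \ x)) = ⊥) ↔
      (∃ (n : ℕ) (F : Fin n → Type) (inst : ∀ i, CoheytingAlgebra (F i))
        (e : L ≃ ∀ i, F i),
          (∀ i, @TopIrred (F i) (inst i)) ∧
          @IsCoheytingEmb L (∀ i, F i) _ (@Pi.instCoheytingAlgebra (Fin n) F inst) e)) := by
  have hmax (x : L) : (SupIrred x ∧ ∀ y : L, SupIrred y → x ≤ y → x = y) ↔ Maximal SupIrred x :=
    maximal_iff.symm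
  change (WeakExcludedMiddle L ↔ _) ∧ (WeakExcludedMiddle L ↔ HasTopIrredDecomposition L)
  simp only [hmax, ← disjoint_iff]
  exact ⟨⟨WeakExcludedMiddle.pairwise_disjoint,
      fun h => (hasTopIrredDecomposition_of_pairwise_disjoint h).weakExcludedMiddle⟩,
    ⟨fun h => hasTopIrredDecomposition_of_pairwise_disjoint h.pairwise_disjoint,
      HasTopIrredDecomposition.weakExcludedMiddle⟩⟩
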